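/- Fix an integer k ≥ 1 and let g ∈ ℚ[[x]] be the unique formal power series with constant term 1 satisfying g = 1 + x·g^k; set F = -x·g^{2k-1}. Then: (i) F∘F = x and g·(g∘F) = 1, so for every m with 0 ≤ m ≤ k the pair (g^m, F) is a Riordan involution; (ii) for each such m, letting M_{n,j} ∈ ℚ[y] be the coefficient of xⁿ in (1 + x·y·(1+x)^{k-1})·(1+x)^{-m}·(x·(1+x)^{-k})^j, the unique sequence (μ_n) in ℚ[y] with ∑_{j=0}^{n} M_{n,j}·μ_j = δ_{n,0} for all n satisfies μ_n = ∑_{j=0}^{n} t_{n,j}·y^j, where t_{n,j} ∈ ℚ is the coefficient of xⁿ in g^m·F^j. That is, the coefficient matrix of the moments of the parameterized Riordan array ((1+xy(1+x)^{k-1})/(1+x)^m, x/(1+x)^k) is the Riordan involution (g^m, -x·g^{2k-1}). -/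

import Mathlib

/-!
Everything rests on the uniqueness of the solution of `G = 1 + h·Gᵏ` when `h(0) = 0`, of which
`g ∘ h` is one. Hence `g ∘ F = 1 - x·g^{k-1} = 1/g`, so `F ∘ F = x`; and for `R = x/(1+x)ᵏ`
one gets `g ∘ R = 1 + x` and `F ∘ R = -x(1+x)^{k-1}`. Consequently `Φ = gᵐ/(1 - yF)`, whose
coefficients are the polynomials `∑ⱼ t_{n,j} yʲ`, satisfies
`(1 + xy(1+x)^{k-1})(1+x)^{-m} · (Φ ∘ R) = 1`, which says `∑ⱼ M_{n,j} Φⱼ = δ_{n,0}`;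
the system being unitriangular, `μ = Φ`.
-/

open PowerSeries Finset

/-- Substitution `f ∘ h` of a power series `h` (intended to have zero constant
term) into a power series `f`: the coefficient of `xⁿ` is
`∑_{k=0}^{n} f_k · [xⁿ](hᵏ)`. -/
noncomputable def PowerSeries.comp {R : Type*} [CommSemiring R]
    (f h : PowerSeries R) : PowerSeries R :=
  PowerSeries.mk fun n => ∑ k ∈ Finset.range (n + 1),
    (PowerSeries.coeff (R := R) k f) * (PowerSeries.coeff (R := R) n (h ^ k))

namespace PowerSeries

variable {A : Type*} [CommRing A]

theorem coeff_pow_eq_zero_of_lt {h : A⟦X⟧} (h0 : constantCoeff h = 0) {j n : ℕ} (hn : n < j) :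
    coeff n (h ^ j) = 0 :=
  X_pow_dvd_iff.mp (pow_dvd_pow_of_dvd (X_dvd_iff.mpr h0) j) n hn

theorem coeff_comp_eq_sum_range {h : A⟦X⟧} (h0 : constantCoeff h = 0) (f : A⟦X⟧) {n N : ℕ}
    (hN : n < N) : coeff n (f.comp h) = ∑ j ∈ Finset.range N, coeff j f * coeff n (h ^ j) := by
  rw [comp, coeff_mk]
  refine Finset.sum_subset (Finset.range_subset_range.mpr hN) fun j _ hj => ?_
  rw [coeff_pow_eq_zero_of_lt h0 (by simpa using hj), mul_zero]

theorem comp_eq_substAlgHom {h : A⟦X⟧} (h0 : constantCoeff h = 0) (f : A⟦X⟧) :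
    f.comp h = substAlgHom (HasSubst.of_constantCoeff_zero' h0) f := by
  ext n
  rw [coe_substAlgHom, coeff_subst' (HasSubst.of_constantCoeff_zero' h0),
    coeff_comp_eq_sum_range h0 f n.lt_succ_self, finsum_eq_sum_of_support_subset]
  · rfl
  · refine Function.support_subset_iff'.mpr fun j hj => ?_
    rw [coeff_pow_eq_zero_of_lt h0 (by simpa using hj), smul_zero]

section comp

variable {h : A⟦X⟧} (h0 : constantCoeff h = 0)
include h0

theorem comp_one : (1 : A⟦X⟧).comp h = 1 := by
  rw [comp_eq_substAlgHom h0, map_one]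

theorem comp_C (a : A) : (C a).comp h = C a := by
  rw [comp_eq_substAlgHom h0, C_eq_algebraMap, AlgHom.commutes]

theorem comp_X : (X : A⟦X⟧).comp h = h := by
  rw [comp_eq_substAlgHom h0, substAlgHom_X]

theorem comp_add (f g : A⟦X⟧) : (f + g).comp h = f.comp h + g.comp h := by
  simp only [comp_eq_substAlgHom h0, map_add]

theorem comp_sub (f g : A⟦X⟧) : (f - g).comp h = f.comp h - g.comp h := by
  simp only [comp_eq_substAlgHom h0, map_sub]

theorem comp_neg (f : A⟦X⟧) : (-f).comp h = -f.comp h := by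
  simp only [comp_eq_substAlgHom h0, map_neg]

theorem comp_mul (f g : A⟦X⟧) : (f * g).comp h = f.comp h * g.comp h := by
  simp only [comp_eq_substAlgHom h0, map_mul]

theorem comp_pow (f : A⟦X⟧) (j : ℕ) : (f ^ j).comp h = f.comp h ^ j := by
  simp only [comp_eq_substAlgHom h0, map_pow]

theorem sum_coeff_mul_pow_mul_coeff (d f : A⟦X⟧) (n : ℕ) :
    ∑ j ∈ Finset.range (n + 1), coeff n (d * h ^ j) * coeff j f = coeff n (d * f.comp h) := by
  rw [coeff_mul, eq_comm]
  calc ∑ p ∈ antidiagonal n, coeff p.1 d * coeff p.2 (f.comp h)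
      = ∑ p ∈ antidiagonal n, ∑ j ∈ Finset.range (n + 1),
          coeff p.1 d * (coeff j f * coeff p.2 (h ^ j)) := by
        refine Finset.sum_congr rfl fun p hp => ?_
        rw [coeff_comp_eq_sum_range h0 f (Finset.Nat.antidiagonal.snd_lt hp), Finset.mul_sum]
    _ = _ := by
        rw [Finset.sum_comm]
        refine Finset.sum_congr rfl fun j _ => ?_
        rw [coeff_mul, Finset.sum_mul]
        exact Finset.sum_congr rfl fun _ _ => by ring

end comp

theorem coeff_mul_X_mul_pow_self (d w : A⟦X⟧) (n : ℕ) :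
    coeff n (d * (X * w) ^ n) = constantCoeff d * constantCoeff w ^ n := by
  rw [mul_pow, mul_left_comm, coeff_X_pow_mul', if_pos le_rfl, Nat.sub_self,
    coeff_zero_eq_constantCoeff_apply, map_mul, map_pow]

theorem coeff_mul_of_one_sub_mul_eq_one {E U : A⟦X⟧} (hE0 : constantCoeff E = 0)
    (hU : (1 - E) * U = 1) (d : A⟦X⟧) (n : ℕ) :
    coeff n (d * U) = ∑ i ∈ Finset.range (n + 1), coeff n (d * E ^ i) := by
  have hgeom : ∑ i ∈ Finset.range (n + 1), E ^ i = (1 - E ^ (n + 1)) * U := by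
    rw [← geom_sum_mul_neg, mul_assoc, hU, mul_one]
  have hsplit : d * U = d * ∑ i ∈ Finset.range (n + 1), E ^ i + E ^ (n + 1) * (d * U) := by
    rw [hgeom]; ring
  have htail : coeff n (E ^ (n + 1) * (d * U)) = 0 :=
    X_pow_dvd_iff.mp ((pow_dvd_pow_of_dvd (X_dvd_iff.mpr hE0) _).mul_right _) n n.lt_succ_self
  rw [hsplit, map_add, htail, add_zero, Finset.mul_sum, map_sum]

theorem coeff_map_mul_C_mul_map_pow {B : Type*} [CommRing B] (φ : A →+* B) (b : B)
    (f h : A⟦X⟧) (n i : ℕ) :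
    coeff n (map φ f * (C b * map φ h) ^ i) = φ (coeff n (f * h ^ i)) * b ^ i := by
  rw [mul_pow, ← map_pow, mul_left_comm, ← map_pow, ← map_mul, coeff_C_mul, coeff_map, mul_comm]

theorem eq_of_eq_one_add_mul_pow (k : ℕ) {h G₁ G₂ : A⟦X⟧} (h0 : constantCoeff h = 0)
    (h₁ : G₁ = 1 + h * G₁ ^ k) (h₂ : G₂ = 1 + h * G₂ ^ k) : G₁ = G₂ := by
  obtain ⟨s, hs⟩ := sub_dvd_pow_sub_pow G₁ G₂ k
  have hrec : G₁ - G₂ = (G₁ - G₂) * (s * h) := by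
    conv_lhs => rw [h₁, h₂]
    rw [show 1 + h * G₁ ^ k - (1 + h * G₂ ^ k) = h * (G₁ ^ k - G₂ ^ k) by ring, hs]
    ring
  -- `h` has no constant term, so each application of `hrec` gains a factor `X`
  have hdvd : ∀ n : ℕ, X ^ n ∣ G₁ - G₂ := by
    intro n
    induction n with
    | zero => simp
    | succ n ih =>
      rw [hrec, pow_succ]
      exact mul_dvd_mul ih (Dvd.dvd.mul_left (X_dvd_iff.mpr h0) s)
  refine sub_eq_zero.mp (ext fun n => ?_)
  rw [map_zero]
  exact X_pow_dvd_iff.mp (hdvd (n + 1)) n n.lt_succ_self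

section Riordan

variable {k : ℕ} {g : A⟦X⟧} (hg : g = 1 + X * g ^ k)
include hg

theorem comp_eq_of_eq_one_add_mul_pow {h G : A⟦X⟧} (h0 : constantCoeff h = 0)
    (hG : G = 1 + h * G ^ k) : g.comp h = G := by
  refine eq_of_eq_one_add_mul_pow k h0 ?_ hG
  conv_lhs => rw [hg]
  rw [comp_add h0, comp_one h0, comp_mul h0, comp_X h0, comp_pow h0]

theorem comp_X_mul_pow {v : A⟦X⟧} (hv : (1 + X) * v = 1) : g.comp (X * v ^ k) = 1 + X := by
  refine comp_eq_of_eq_one_add_mul_pow hg (by simp) ?_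
  rw [mul_assoc, ← mul_pow, mul_comm v, hv, one_pow, mul_one]

variable (hk : 1 ≤ k)
include hk

theorem mul_one_sub_X_mul_pow_pred : g * (1 - X * g ^ (k - 1)) = 1 := by
  have hgk : g * g ^ (k - 1) = g ^ k := by rw [← pow_succ', Nat.sub_add_cancel hk]
  calc g * (1 - X * g ^ (k - 1)) = g - X * g ^ k := by rw [← hgk]; ring
    _ = 1 := by nth_rewrite 1 [hg]; ring

theorem comp_neg_X_mul_pow : g.comp (-(X * g ^ (2 * k - 1))) = 1 - X * g ^ (k - 1) := by
  refine comp_eq_of_eq_one_add_mul_pow hg (by simp) ?_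
  have hinv := mul_one_sub_X_mul_pow_pred hg hk
  calc 1 - X * g ^ (k - 1) = 1 - X * g ^ (k - 1) * (g ^ k * (1 - X * g ^ (k - 1)) ^ k) := by
        rw [← mul_pow, hinv, one_pow, mul_one]
    _ = _ := by rw [show 2 * k - 1 = (k - 1) + k by omega, pow_add]; ring

theorem mul_comp_neg_X_mul_pow : g * g.comp (-(X * g ^ (2 * k - 1))) = 1 := by
  rw [comp_neg_X_mul_pow hg hk, mul_one_sub_X_mul_pow_pred hg hk]

theorem neg_X_mul_pow_comp_self :
    (-(X * g ^ (2 * k - 1))).comp (-(X * g ^ (2 * k - 1))) = X := by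
  have h0 : constantCoeff (-(X * g ^ (2 * k - 1))) = 0 := by simp
  rw [comp_neg h0, comp_mul h0, comp_X h0, comp_pow h0, neg_mul, neg_neg, mul_assoc, ← mul_pow,
    mul_comp_neg_X_mul_pow hg hk, one_pow, mul_one]

variable {v : A⟦X⟧} (hv : (1 + X) * v = 1)
include hv

theorem neg_X_mul_pow_comp_X_mul_pow :
    (-(X * g ^ (2 * k - 1))).comp (X * v ^ k) = -(X * (1 + X) ^ (k - 1)) := by
  have h0 : constantCoeff (X * v ^ k) = 0 := by simp
  rw [comp_neg h0, comp_mul h0, comp_X h0, comp_pow h0, comp_X_mul_pow hg hv,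
    show 2 * k - 1 = k + (k - 1) by omega, pow_add, ← mul_assoc, mul_assoc X, ← mul_pow,
    mul_comm v, hv, one_pow, mul_one]

theorem mul_comp_X_mul_pow_eq_one (y : A) {U : A⟦X⟧}
    (hU : (1 - C y * -(X * g ^ (2 * k - 1))) * U = 1) (m : ℕ) :
    (1 + X * C y * (1 + X) ^ (k - 1)) * v ^ m * (g ^ m * U).comp (X * v ^ k) = 1 := by
  have h0 : constantCoeff (X * v ^ k) = 0 := by simp
  have hU' := congrArg (comp · (X * v ^ k)) hU
  simp only [comp_mul h0, comp_sub h0, comp_one h0, comp_C h0,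
    neg_X_mul_pow_comp_X_mul_pow hg hk hv] at hU'
  rw [comp_mul h0, comp_pow h0, comp_X_mul_pow hg hv]
  calc (1 + X * C y * (1 + X) ^ (k - 1)) * v ^ m * ((1 + X) ^ m * U.comp (X * v ^ k))
      = (1 - C y * -(X * (1 + X) ^ (k - 1))) * U.comp (X * v ^ k) * ((1 + X) ^ m * v ^ m) := by
        ring
    _ = 1 := by rw [hU', ← mul_pow, hv, one_pow, mul_one]

end Riordan

end PowerSeries

theorem eq_of_sum_range_mul_eq {R : Type*} [Ring R] {M : ℕ → ℕ → R} (hM : ∀ n, M n n = 1)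
    {a b : ℕ → R}
    (hab : ∀ n, ∑ j ∈ Finset.range (n + 1), M n j * a j = ∑ j ∈ Finset.range (n + 1), M n j * b j)
    (n : ℕ) : a n = b n := by
  induction n using Nat.strong_induction_on with
  | _ n ih =>
    have h := hab n
    rw [Finset.sum_range_succ, Finset.sum_range_succ, hM, one_mul, one_mul,
      Finset.sum_congr rfl fun j hj => by rw [ih j (Finset.mem_range.mp hj)]] at h
    exact add_left_cancel h

theorem stmt18_general (k : ℕ) (hk : 1 ≤ k) (g : PowerSeries ℚ)
    (hg : g = 1 + PowerSeries.X * g ^ k)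
    (F : PowerSeries ℚ) (hF : F = -(PowerSeries.X * g ^ (2 * k - 1))) :
    (PowerSeries.comp F F = PowerSeries.X ∧ g * PowerSeries.comp g F = 1 ∧
      ∀ m : ℕ, m ≤ k → g ^ m * PowerSeries.comp (g ^ m) F = 1) ∧
    (∀ m : ℕ, m ≤ k →
      ∀ v : PowerSeries (Polynomial ℚ), (1 + PowerSeries.X) * v = 1 →
      ∀ M : ℕ → ℕ → Polynomial ℚ,
        (∀ n j : ℕ, M n j =
          PowerSeries.coeff (R := Polynomial ℚ) n
            ((1 + PowerSeries.X * PowerSeries.C (R := Polynomial ℚ) Polynomial.X *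
                (1 + PowerSeries.X) ^ (k - 1)) * v ^ m *
              (PowerSeries.X * v ^ k) ^ j)) →
      ∀ μ : ℕ → Polynomial ℚ,
        (∀ n : ℕ, ∑ j ∈ Finset.range (n + 1), M n j * μ j = if n = 0 then 1 else 0) →
      ∀ n : ℕ, μ n = ∑ j ∈ Finset.range (n + 1),
        Polynomial.C (PowerSeries.coeff (R := ℚ) n (g ^ m * F ^ j)) * Polynomial.X ^ j) := by
  subst hF
  have hF0 : constantCoeff (-(X * g ^ (2 * k - 1))) = 0 := by simp
  refine ⟨⟨neg_X_mul_pow_comp_self hg hk, mul_comp_neg_X_mul_pow hg hk, fun m _ => ?_⟩, ?_⟩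
  · rw [comp_pow hF0, ← mul_pow, mul_comp_neg_X_mul_pow hg hk, one_pow]
  intro m _ v hv M hM μ hμ n
  set G := PowerSeries.map (Polynomial.C (R := ℚ)) g
  have hG : G = 1 + X * G ^ k := by simpa using congrArg (PowerSeries.map Polynomial.C) hg
  set E := C Polynomial.X * PowerSeries.map Polynomial.C (-(X * g ^ (2 * k - 1)))
  have hEG : E = C Polynomial.X * -(X * G ^ (2 * k - 1)) := by simp [E, G]
  have hE0 : constantCoeff E = 0 := by simp [hEG]
  -- `G ^ m * U` is `Φ = gᵐ/(1 - yF)`, read over `ℚ[y]`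
  obtain ⟨U, hU⟩ : ∃ U, (1 - E) * U = 1 := ⟨_, mul_invOfUnit (1 - E) 1 (by simp [hE0])⟩
  have hmoment : ∀ n, ∑ j ∈ Finset.range (n + 1), M n j * coeff j (G ^ m * U)
      = if n = 0 then 1 else 0 := fun n => by
    simp only [hM]
    rw [sum_coeff_mul_pow_mul_coeff (by simp),
      mul_comp_X_mul_pow_eq_one hG hk hv _ (hEG ▸ hU), coeff_one]
  have hdiag : ∀ n, M n n = 1 := fun n => by
    have hv0 : constantCoeff v = 1 := by simpa using congrArg constantCoeff hv
    rw [hM, coeff_mul_X_mul_pow_self]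
    simp [hv0]
  rw [eq_of_sum_range_mul_eq hdiag (fun n => (hμ n).trans (hmoment n).symm) n,
    coeff_mul_of_one_sub_mul_eq_one hE0 hU]
  refine Finset.sum_congr rfl fun i _ => ?_
  rw [← map_pow, coeff_map_mul_C_mul_map_pow]

/-- Let `g = 1 + x·gᵏ` and `F = -x·g^{2k-1}`. Then `(gᵐ, F)` is a Riordan
involution for `0 ≤ m ≤ k`, and the coefficient matrix of the moments of the
parameterized Riordan array `((1+xy(1+x)^{k-1})/(1+x)ᵐ, x/(1+x)ᵏ)` is the
Riordan involution `(gᵐ, -x·g^{2k-1})`. -/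
theorem stmt18 (k : ℕ) (hk : 1 ≤ k) (g : PowerSeries ℚ)
    (hg0 : PowerSeries.constantCoeff (R := ℚ) g = 1)
    (hg : g = 1 + PowerSeries.X * g ^ k)
    (F : PowerSeries ℚ) (hF : F = -(PowerSeries.X * g ^ (2 * k - 1))) :
    (PowerSeries.comp F F = PowerSeries.X ∧ g * PowerSeries.comp g F = 1 ∧
      ∀ m : ℕ, m ≤ k → g ^ m * PowerSeries.comp (g ^ m) F = 1) ∧
    (∀ m : ℕ, m ≤ k →
      ∀ v : PowerSeries (Polynomial ℚ), (1 + PowerSeries.X) * v = 1 →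
      ∀ M : ℕ → ℕ → Polynomial ℚ,
        (∀ n j : ℕ, M n j =
          PowerSeries.coeff (R := Polynomial ℚ) n
            ((1 + PowerSeries.X * PowerSeries.C (R := Polynomial ℚ) Polynomial.X *
                (1 + PowerSeries.X) ^ (k - 1)) * v ^ m *
              (PowerSeries.X * v ^ k) ^ j)) →
      ∀ μ : ℕ → Polynomial ℚ,
        (∀ n : ℕ, ∑ j ∈ Finset.range (n + 1), M n j * μ j = if n = 0 then 1 else 0) →
      ∀ n : ℕ, μ n = ∑ j ∈ Finset.range (n + 1),
        Polynomial.C (PowerSeries.coeff (R := ℚ) n (g ^ m * F ^ j)) * Polynomial.X ^ j) :=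
  stmt18_general k hk g hg F hF
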